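/- arXiv:2106.13949 — 2 statements merged into one kernel-verified Lean document; each statement's English description precedes it below -/
import Mathlib

section
/- Let A be a bounded linear operator on a complex Hilbert space H and suppose w(A)² = (1/4)‖A*A + AA*‖. Then ‖Re(A) + Im(A)‖ = ‖Re(A) − Im(A)‖. -/
open ContinuousLinearMap Complex

variable {H : Type*} [NormedAddCommGroup H] [InnerProductSpace ℂ H] [CompleteSpace H]

noncomputable def nrad (A : H →L[ℂ] H) : ℝ :=
  ⨆ x : {x : H // ‖x‖ = 1}, ‖(inner ℂ (A x) (x : H) : ℂ)‖

noncomputable def reP (A : H →L[ℂ] H) : H →L[ℂ] H := (2 : ℂ)⁻¹ • (A + adjoint A)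
noncomputable def imP (A : H →L[ℂ] H) : H →L[ℂ] H := (2 * Complex.I)⁻¹ • (A - adjoint A)

noncomputable def oabs (A : H →L[ℂ] H) : H →L[ℂ] H := cfc Real.sqrt (adjoint A * A)

noncomputable def opow (T : H →L[ℂ] H) (r : ℝ) : H →L[ℂ] H := cfc (fun t : ℝ => t ^ r) T

/-!
Put `S = Re A + Im A` and `D = Re A - Im A`. Both are self-adjoint, and `⟨S x, x⟩`, `⟨D x, x⟩`
are `re z ± im z` for `z = ⟨A x, x⟩`, so `‖S‖, ‖D‖ ≤ √2 w(A)`. On the other hand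
`S² + D² = A*A + AA*`, whence `4 w(A)² = ‖S² + D²‖ ≤ ‖S‖² + ‖D‖²`. Both squares are at most
`2 w(A)²` and their sum is at least `4 w(A)²`, so `‖S‖² = ‖D‖² = 2 w(A)²`.
-/

theorem Complex.abs_re_add_im_le (z : ℂ) : |z.re + z.im| ≤ √2 * ‖z‖ := by
  rw [← Real.sqrt_sq_eq_abs, ← Real.sqrt_sq (norm_nonneg z), ← Real.sqrt_mul zero_le_two]
  refine Real.sqrt_le_sqrt ?_
  rw [Complex.sq_norm, Complex.normSq_apply]
  nlinarith [sq_nonneg (z.re - z.im)]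

theorem Complex.abs_re_sub_im_le (z : ℂ) : |z.re - z.im| ≤ √2 * ‖z‖ := by
  simpa [sub_eq_add_neg] using abs_re_add_im_le (starRingEnd ℂ z)

theorem ContinuousLinearMap.norm_le_of_forall_abs_re_inner_le {𝕜 E : Type*} [RCLike 𝕜]
    [NormedAddCommGroup E] [InnerProductSpace 𝕜 E] {T : E →L[𝕜] E}
    (hT : (T : E →ₗ[𝕜] E).IsSymmetric) {M : ℝ} (hM : 0 ≤ M)
    (h : ∀ x, |RCLike.re (inner 𝕜 x (T x))| ≤ M * ‖x‖ ^ 2) : ‖T‖ ≤ M := by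
  rw [T.norm_eq_iSup_rayleighQuotient hT]
  refine ciSup_le fun x => ?_
  rcases eq_or_ne x 0 with rfl | hx
  · simpa using hM
  · rw [rayleighQuotient, reApplyInnerSelf_apply, abs_div, abs_sq, div_le_iff₀ (by positivity),
      inner_re_symm]
    exact h x

section NumericalRadius

variable {E : Type*} [NormedAddCommGroup E] [InnerProductSpace ℂ E]

theorem nrad_nonneg (A : E →L[ℂ] E) : 0 ≤ nrad A :=
  Real.iSup_nonneg fun _ => norm_nonneg _

theorem bddAbove_range_norm_inner_apply_self (A : E →L[ℂ] E) :
    BddAbove (Set.range fun x : {x : E // ‖x‖ = 1} => ‖inner ℂ (A x) (x : E)‖) :=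
  ⟨‖A‖, by
    rintro - ⟨x, rfl⟩
    exact (norm_inner_le_norm _ _).trans (by simpa [x.2] using A.le_opNorm x)⟩

theorem norm_inner_apply_self_le_nrad_mul (A : E →L[ℂ] E) (x : E) :
    ‖inner ℂ (A x) x‖ ≤ nrad A * ‖x‖ ^ 2 := by
  rcases eq_or_ne x 0 with rfl | hx
  · simp
  have hx' : 0 < ‖x‖ := norm_pos_iff.2 hx
  let u : {x : E // ‖x‖ = 1} := ⟨(‖x‖⁻¹ : ℂ) • x, by simp [norm_smul, hx'.ne']⟩
  have hu : ‖inner ℂ (A u) (u : E)‖ = ‖inner ℂ (A x) x‖ / ‖x‖ ^ 2 := by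
    simp only [u, map_smul, inner_smul_left, inner_smul_right, map_inv₀, conj_ofReal,
      Complex.norm_mul, norm_inv, norm_real, norm_norm]
    field_simp
  rw [← div_le_iff₀ (by positivity), ← hu]
  exact le_ciSup (bddAbove_range_norm_inner_apply_self A) u

theorem norm_le_mul_nrad_of_abs_re_inner_le {T A : E →L[ℂ] E}
    (hT : (T : E →ₗ[ℂ] E).IsSymmetric) {c : ℝ} (hc : 0 ≤ c)
    (h : ∀ x, |(inner ℂ x (T x)).re| ≤ c * ‖inner ℂ x (A x)‖) : ‖T‖ ≤ c * nrad A := by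
  refine norm_le_of_forall_abs_re_inner_le hT (mul_nonneg hc (nrad_nonneg A)) fun x => ?_
  calc |(inner ℂ x (T x)).re| ≤ c * ‖inner ℂ x (A x)‖ := h x
    _ ≤ c * (nrad A * ‖x‖ ^ 2) := by
      rw [norm_inner_symm]
      gcongr
      exact norm_inner_apply_self_le_nrad_mul A x
    _ = c * nrad A * ‖x‖ ^ 2 := by ring

end NumericalRadius

theorem isSelfAdjoint_reP (A : H →L[ℂ] H) : IsSelfAdjoint (reP A) := by
  simp [IsSelfAdjoint, reP, star_eq_adjoint, add_comm]

theorem isSelfAdjoint_imP (A : H →L[ℂ] H) : IsSelfAdjoint (imP A) := by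
  simp [IsSelfAdjoint, imP, star_eq_adjoint, ← smul_neg]

theorem inner_reP_apply (A : H →L[ℂ] H) (x : H) :
    inner ℂ x (reP A x) = ((inner ℂ x (A x)).re : ℂ) := by
  rw [reP, smul_apply, add_apply, inner_smul_right, inner_add_right, adjoint_inner_right,
    ← inner_conj_symm (A x) x, add_conj]
  push_cast
  ring

theorem inner_imP_apply (A : H →L[ℂ] H) (x : H) :
    inner ℂ x (imP A x) = ((inner ℂ x (A x)).im : ℂ) := by
  rw [imP, smul_apply, sub_apply, inner_smul_right, inner_sub_right, adjoint_inner_right,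
    ← inner_conj_symm (A x) x, sub_conj]
  push_cast
  field_simp

theorem norm_reP_add_imP_le (A : H →L[ℂ] H) : ‖reP A + imP A‖ ≤ √2 * nrad A := by
  refine norm_le_mul_nrad_of_abs_re_inner_le
    ((isSelfAdjoint_reP A).add (isSelfAdjoint_imP A)).isSymmetric (by positivity) fun x => ?_
  rw [add_apply, inner_add_right, inner_reP_apply, inner_imP_apply, ← ofReal_add, ofReal_re]
  exact abs_re_add_im_le _

theorem norm_reP_sub_imP_le (A : H →L[ℂ] H) : ‖reP A - imP A‖ ≤ √2 * nrad A := by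
  refine norm_le_mul_nrad_of_abs_re_inner_le
    ((isSelfAdjoint_reP A).sub (isSelfAdjoint_imP A)).isSymmetric (by positivity) fun x => ?_
  rw [sub_apply, inner_sub_right, inner_reP_apply, inner_imP_apply, ← ofReal_sub, ofReal_re]
  exact abs_re_sub_im_le _

theorem sq_reP_add_imP_add_sq_reP_sub_imP (A : H →L[ℂ] H) :
    (reP A + imP A) ^ 2 + (reP A - imP A) ^ 2 = adjoint A * A + A * adjoint A := by
  have hI : (2 * I)⁻¹ * (2 * I)⁻¹ = -(4 : ℂ)⁻¹ := by
    rw [← mul_inv, show 2 * I * (2 * I) = -4 by ring_nf; rw [I_sq]; ring, inv_neg]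
  simp only [reP, imP, sq, add_mul, mul_add, sub_mul, mul_sub, smul_mul_smul_comm, hI]
  module

theorem stmt4 (A : H →L[ℂ] H) (h : (nrad A) ^ 2 = (1/4) * ‖adjoint A * A + A * adjoint A‖) :
    ‖reP A + imP A‖ = ‖reP A - imP A‖ := by
  have hS := (isSelfAdjoint_reP A).add (isSelfAdjoint_imP A)
  have hD := (isSelfAdjoint_reP A).sub (isSelfAdjoint_imP A)
  have sq_le {T : H →L[ℂ] H} (hT : ‖T‖ ≤ √2 * nrad A) : ‖T‖ ^ 2 ≤ 2 * nrad A ^ 2 := by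
    calc ‖T‖ ^ 2 ≤ (√2 * nrad A) ^ 2 := pow_le_pow_left₀ (norm_nonneg T) hT 2
      _ = 2 * nrad A ^ 2 := by rw [mul_pow, Real.sq_sqrt zero_le_two]
  have hsum : 4 * nrad A ^ 2 ≤ ‖reP A + imP A‖ ^ 2 + ‖reP A - imP A‖ ^ 2 :=
    calc 4 * nrad A ^ 2 = ‖adjoint A * A + A * adjoint A‖ := by rw [h]; ring
      _ = ‖(reP A + imP A) ^ 2 + (reP A - imP A) ^ 2‖ := by
        rw [sq_reP_add_imP_add_sq_reP_sub_imP]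
      _ ≤ ‖(reP A + imP A) ^ 2‖ + ‖(reP A - imP A) ^ 2‖ := norm_add_le _ _
      _ = ‖reP A + imP A‖ ^ 2 + ‖reP A - imP A‖ ^ 2 := by
        simp only [sq, hS.norm_mul_self, hD.norm_mul_self]
  rw [← sq_eq_sq₀ (norm_nonneg _) (norm_nonneg _)]
  linarith [sq_le (norm_reP_add_imP_le A), sq_le (norm_reP_sub_imP_le A)]
end

section
/- Let A and B be bounded linear operators on a complex Hilbert space H and let r ≥ 1. Then w(B*A)^r ≤ (1/2) ‖ |A|^{2r} + |B|^{2r} ‖ (Dragomir's inequality). -/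
/-! By Cauchy–Schwarz, `|⟪B*A x, x⟫| = |⟪A x, B x⟫| ≤ ‖A x‖ ‖B x‖`, and by AM-GM
`(‖A x‖ ‖B x‖)^r ≤ (‖A x‖^{2r} + ‖B x‖^{2r}) / 2`. Since `‖A x‖² = ⟪|A|² x, x⟫`, McCarthy's
inequality `⟪S x, x⟫^r ≤ ⟪S^r x, x⟫` (for `S ≥ 0`, `r ≥ 1`, `‖x‖ = 1`) bounds the right-hand
side by `⟪(|A|^{2r} + |B|^{2r}) x, x⟫ / 2`, which is at most `‖|A|^{2r} + |B|^{2r}‖ / 2`.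
McCarthy's inequality in turn comes from applying the functional calculus to the tangent line
of `t ↦ t^r` at `t = ⟪S x, x⟫`. -/

open ContinuousLinearMap Complex

variable {H : Type*} [NormedAddCommGroup H] [InnerProductSpace ℂ H] [CompleteSpace H]

open scoped InnerProductSpace

lemma Real.tangent_le_rpow {r s t : ℝ} (hr : 1 ≤ r) (hs : 0 < s) (ht : 0 ≤ t) :
    r * s ^ (r - 1) * t - (r - 1) * s ^ r ≤ t ^ r := by
  have hsr : 0 < s ^ r := Real.rpow_pos_of_pos hs r
  have bernoulli :=
    one_add_mul_self_le_rpow_one_add (s := t / s - 1) (by linarith [div_nonneg ht hs.le]) hr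
  rw [add_sub_cancel, Real.div_rpow ht hs.le, le_div_iff₀ hsr] at bernoulli
  rw [Real.rpow_sub_one hs.ne']
  calc _ = (1 + r * (t / s - 1)) * s ^ r := by field_simp; ring
    _ ≤ t ^ r := bernoulli

lemma Real.mul_rpow_le_add_rpow_two_mul_div_two {a b : ℝ} (ha : 0 ≤ a) (hb : 0 ≤ b) (r : ℝ) :
    (a * b) ^ r ≤ (a ^ (2 * r) + b ^ (2 * r)) / 2 := by
  rw [Real.mul_rpow ha hb, mul_comm 2 r, Real.rpow_mul ha, Real.rpow_mul hb]
  norm_cast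
  nlinarith [sq_nonneg (a ^ r - b ^ r)]

lemma ContinuousLinearMap.re_inner_le_re_inner_of_le {𝕜 E : Type*} [RCLike 𝕜]
    [NormedAddCommGroup E] [InnerProductSpace 𝕜 E] {S T : E →L[𝕜] E} (h : S ≤ T) (x : E) :
    RCLike.re ⟪S x, x⟫_𝕜 ≤ RCLike.re ⟪T x, x⟫_𝕜 := by
  have := ((le_def S T).mp h).re_inner_nonneg_left x
  simpa [inner_sub_left] using this

lemma ContinuousLinearMap.re_inner_le_norm_of_norm_eq_one {𝕜 E : Type*} [RCLike 𝕜]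
    [SeminormedAddCommGroup E] [InnerProductSpace 𝕜 E] (T : E →L[𝕜] E) {x : E} (hx : ‖x‖ = 1) :
    RCLike.re ⟪T x, x⟫_𝕜 ≤ ‖T‖ :=
  calc RCLike.re ⟪T x, x⟫_𝕜 ≤ ‖T x‖ * ‖x‖ := re_inner_le_norm _ _
    _ ≤ ‖T‖ * ‖x‖ * ‖x‖ := by gcongr; exact T.le_opNorm x
    _ = ‖T‖ := by rw [hx, mul_one, mul_one]

lemma ContinuousLinearMap.adjoint_mul_self_nonneg {𝕜 E : Type*} [RCLike 𝕜] [NormedAddCommGroup E]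
    [InnerProductSpace 𝕜 E] [CompleteSpace E] (A : E →L[𝕜] E) : 0 ≤ adjoint A * A :=
  (nonneg_iff_isPositive _).mpr (isPositive_adjoint_comp_self A)

lemma re_inner_cfc_affine {S : H →L[ℂ] H} (hS : IsSelfAdjoint S) (c d : ℝ) {x : H}
    (hx : ‖x‖ = 1) :
    RCLike.re ⟪cfc (fun t : ℝ => c * t - d) S x, x⟫_ℂ = c * RCLike.re ⟪S x, x⟫_ℂ - d := by
  rw [cfc_sub (fun t : ℝ => c * t) (fun _ => d) S, cfc_const_mul c (fun t : ℝ => t) S, cfc_id' ℝ S,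
    cfc_const d S]
  simp [Algebra.algebraMap_eq_smul_one, hx]

theorem re_inner_rpow_le_re_inner_cfc_rpow {S : H →L[ℂ] H} (hS : 0 ≤ S) {r : ℝ} (hr : 1 ≤ r)
    {x : H} (hx : ‖x‖ = 1) :
    RCLike.re ⟪S x, x⟫_ℂ ^ r ≤ RCLike.re ⟪cfc (fun t : ℝ => t ^ r) S x, x⟫_ℂ := by
  have hcfc_nonneg : 0 ≤ RCLike.re ⟪cfc (fun t : ℝ => t ^ r) S x, x⟫_ℂ :=
    ((nonneg_iff_isPositive _).mp (cfc_nonneg fun t ht =>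
      Real.rpow_nonneg (spectrum_nonneg_of_nonneg hS ht) r)).re_inner_nonneg_left x
  obtain hs | hs := ((nonneg_iff_isPositive S).mp hS).re_inner_nonneg_left x |>.eq_or_lt
  · rwa [← hs, Real.zero_rpow (by linarith)]
  set s := RCLike.re ⟪S x, x⟫_ℂ
  have tangent : cfc (fun t : ℝ => r * s ^ (r - 1) * t - (r - 1) * s ^ r) S ≤
      cfc (fun t : ℝ => t ^ r) S :=
    cfc_mono (hg := (Real.continuous_rpow_const (by linarith)).continuousOn) fun t ht =>
      Real.tangent_le_rpow hr hs (spectrum_nonneg_of_nonneg hS ht)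
  calc s ^ r = r * s ^ (r - 1) * s - (r - 1) * s ^ r := by
        rw [Real.rpow_sub_one hs.ne']; field_simp; ring
    _ = RCLike.re ⟪cfc (fun t : ℝ => r * s ^ (r - 1) * t - (r - 1) * s ^ r) S x, x⟫_ℂ :=
        (re_inner_cfc_affine hS.isSelfAdjoint _ _ hx).symm
    _ ≤ _ := re_inner_le_re_inner_of_le tangent x

lemma opow_oabs (A : H →L[ℂ] H) {r : ℝ} (hr : 0 ≤ r) :
    opow (oabs A) (2 * r) = cfc (fun t : ℝ => t ^ r) (adjoint A * A) := by
  have hA := adjoint_mul_self_nonneg A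
  rw [opow, oabs, ← cfc_comp (fun t : ℝ => t ^ (2 * r)) Real.sqrt (adjoint A * A) hA.isSelfAdjoint
    (Real.continuous_rpow_const (by positivity)).continuousOn]
  refine cfc_congr fun t ht => ?_
  rw [Function.comp_apply, Real.sqrt_eq_rpow, ← Real.rpow_mul (spectrum_nonneg_of_nonneg hA ht)]
  ring_nf

lemma norm_rpow_two_mul_le_re_inner_opow_oabs (A : H →L[ℂ] H) {r : ℝ} (hr : 1 ≤ r) {x : H}
    (hx : ‖x‖ = 1) :
    ‖A x‖ ^ (2 * r) ≤ RCLike.re ⟪opow (oabs A) (2 * r) x, x⟫_ℂ := by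
  rw [opow_oabs A (by linarith), Real.rpow_mul (norm_nonneg _), Real.rpow_two,
    apply_norm_sq_eq_inner_adjoint_left]
  exact re_inner_rpow_le_re_inner_cfc_rpow (adjoint_mul_self_nonneg A) hr hx

lemma nrad_rpow_le {E : Type*} [NormedAddCommGroup E] [InnerProductSpace ℂ E] {T : E →L[ℂ] E}
    {r c : ℝ} (hr : 0 < r) (hc : 0 ≤ c)
    (h : ∀ x : E, ‖x‖ = 1 → ‖⟪T x, x⟫_ℂ‖ ^ r ≤ c) : nrad T ^ r ≤ c := by
  rw [nrad, ← Real.le_rpow_inv_iff_of_pos (Real.iSup_nonneg fun _ => norm_nonneg _) hc hr]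
  refine Real.iSup_le (fun x => ?_) (by positivity)
  rw [Real.le_rpow_inv_iff_of_pos (norm_nonneg _) hc hr]
  exact h x x.2

theorem stmt18 (A B : H →L[ℂ] H) (r : ℝ) (hr : 1 ≤ r) :
    (nrad (adjoint B * A)) ^ r ≤ (1/2) * ‖opow (oabs A) (2 * r) + opow (oabs B) (2 * r)‖ := by
  set PA := opow (oabs A) (2 * r)
  set PB := opow (oabs B) (2 * r)
  refine nrad_rpow_le (by linarith) (by positivity) fun x hx => ?_
  calc ‖⟪(adjoint B * A) x, x⟫_ℂ‖ ^ r = ‖⟪A x, B x⟫_ℂ‖ ^ r := by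
        rw [mul_apply_eq_comp, adjoint_inner_left]
    _ ≤ (‖A x‖ * ‖B x‖) ^ r := by gcongr; exact norm_inner_le_norm _ _
    _ ≤ (‖A x‖ ^ (2 * r) + ‖B x‖ ^ (2 * r)) / 2 :=
        Real.mul_rpow_le_add_rpow_two_mul_div_two (norm_nonneg _) (norm_nonneg _) r
    _ ≤ (RCLike.re ⟪PA x, x⟫_ℂ + RCLike.re ⟪PB x, x⟫_ℂ) / 2 := by
        gcongr <;> exact norm_rpow_two_mul_le_re_inner_opow_oabs _ hr hx
    _ = RCLike.re ⟪(PA + PB) x, x⟫_ℂ / 2 := by simp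
    _ ≤ 1 / 2 * ‖PA + PB‖ := by linarith [(PA + PB).re_inner_le_norm_of_norm_eq_one hx]
end
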